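/- Let T₁, T₂, T₃, g, η be as in the Kenmotsu example, and set ξ = T₃. Define the Lie derivative of g along ξ on vector fields X, Y by (L_ξ g)(X, Y)(x) = ξ·(g(X,Y))(x) − gₓ([ξ, X](x), Y(x)) − gₓ(X(x), [ξ, Y](x)). Then for all i, j ∈ {1, 2, 3} and every x with x₃ ≠ 0: (L_ξ g)(T_i, T_j)(x) = 2·[gₓ(T_i(x), T_j(x)) − ηₓ(T_i(x))·ηₓ(T_j(x))]. (This verifies on the orthonormal frame the Kenmotsu identity (L_ξ g)(X, Y) = 2[g(X, Y) − η(X)η(Y)].) -/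

import Mathlib

open scoped BigOperators

noncomputable section

/-- Points/vectors of ℝ³. -/
abbrev V3 := Fin 3 → ℝ

/-- T₁(x) = x₃·e₁ -/
def T1 (x : V3) : V3 := ![x 2, 0, 0]

/-- T₂(x) = x₃·e₂ -/
def T2 (x : V3) : V3 := ![0, x 2, 0]

/-- T₃(x) = −x₃·e₃ -/
def T3 (x : V3) : V3 := ![0, 0, -(x 2)]

/-- The frame (T₁, T₂, T₃). -/
def T : Fin 3 → (V3 → V3) := ![T1, T2, T3]

/-- Lie bracket [X,Y](x) = (DY)ₓ(X(x)) − (DX)ₓ(Y(x)). -/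
noncomputable def lieBracket (X Y : V3 → V3) (x : V3) : V3 :=
  fderiv ℝ Y x (X x) - fderiv ℝ X x (Y x)

/-- The metric gₓ(u,v) = x₃⁻²·⟨u,v⟩ (Euclidean inner product). -/
noncomputable def gmet (x u v : V3) : ℝ := ((x 2) ^ 2)⁻¹ * ∑ i, u i * v i

/-- The 1-form ηₓ(v) = −v₃/x₃. -/
noncomputable def eta (x v : V3) : ℝ := -(v 2) / x 2

/-- The structure tensor φ: φ(e₁) = −e₂, φ(e₂) = e₁, φ(e₃) = 0. -/
def phi (v : V3) : V3 := ![v 1, -(v 0), 0]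

/-- Directional derivative X·f at x: (Df)ₓ(X(x)). -/
noncomputable def dirD (X : V3 → V3) (f : V3 → ℝ) (x : V3) : ℝ := fderiv ℝ f x (X x)

/-- The Koszul expression K(X,Y,Z). -/
noncomputable def koszul (X Y Z : V3 → V3) (x : V3) : ℝ :=
  dirD X (fun p => gmet p (Y p) (Z p)) x
    + dirD Y (fun p => gmet p (Z p) (X p)) x
    - dirD Z (fun p => gmet p (X p) (Y p)) x
    - gmet x (X x) (lieBracket Y Z x)
    - gmet x (Y x) (lieBracket X Z x)
    + gmet x (Z x) (lieBracket X Y x)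

/-- Lie derivative of g along a vector field W:
(L_W g)(X,Y)(x) = W·(g(X,Y))(x) − gₓ([W,X](x), Y(x)) − gₓ(X(x), [W,Y](x)). -/
noncomputable def lieDerivG (W X Y : V3 → V3) (x : V3) : ℝ :=
  dirD W (fun p => gmet p (X p) (Y p)) x
    - gmet x (lieBracket W X x) (Y x)
    - gmet x (X x) (lieBracket W Y x)

/-- The potential vector field V(x) = 2x₁·e₁ + 2x₂·e₂ + x₃·e₃. -/
def Vf (x : V3) : V3 := ![2 * x 0, 2 * x 1, x 2]

/-!
Each frame field is `x ↦ x₃ • u` for a constant vector `u`, and the identity holds for all such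
fields. Off the plane `x₃ = 0`, `g(x₃u, x₃v) = ⟨u, v⟩` is constant, so the derivative term of
`L_ξ g` vanishes; a direct computation gives the Kenmotsu relation `[ξ, X] = -X + η(X) ξ`; and
`g(ξ, ·) = η` by definition of `η`. Substituting, `(L_ξ g)(X, Y) = 2 g(X, Y) - 2 η(X) η(Y)`.
-/

def scaleField (u : V3) (x : V3) : V3 := x 2 • u

lemma T_eq_scaleField (i : Fin 3) : ∃ u, T i = scaleField u := by
  fin_cases i
  · exact ⟨![1, 0, 0], funext fun x => by ext k; fin_cases k <;> simp [T, T1, scaleField]⟩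
  · exact ⟨![0, 1, 0], funext fun x => by ext k; fin_cases k <;> simp [T, T2, scaleField]⟩
  · exact ⟨![0, 0, -1], funext fun x => by ext k; fin_cases k <;> simp [T, T3, scaleField]⟩

lemma T3_eq_scaleField : T3 = scaleField ![0, 0, -1] :=
  funext fun x => by ext k; fin_cases k <;> simp [T3, scaleField]

lemma hasFDerivAt_scaleField (u x : V3) :
    HasFDerivAt (scaleField u) ((ContinuousLinearMap.proj (R := ℝ) 2).smulRight u) x :=
  ((ContinuousLinearMap.proj (R := ℝ) (φ := fun _ : Fin 3 => ℝ) 2).smulRight u).hasFDerivAt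

lemma lieBracket_scaleField (u v x : V3) :
    lieBracket (scaleField u) (scaleField v) x = x 2 • (u 2 • v - v 2 • u) := by
  simp only [lieBracket, (hasFDerivAt_scaleField _ x).fderiv, ContinuousLinearMap.smulRight_apply,
    ContinuousLinearMap.proj_apply, scaleField, Pi.smul_apply, smul_eq_mul, smul_sub, smul_smul]

lemma gmet_eq_dotProduct (x u v : V3) : gmet x u v = ((x 2) ^ 2)⁻¹ * (u ⬝ᵥ v) := rfl

lemma gmet_scaleField {x : V3} (hx : x 2 ≠ 0) (u v : V3) :
    gmet x (scaleField u x) (scaleField v x) = u ⬝ᵥ v := by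
  rw [gmet_eq_dotProduct, scaleField, scaleField, smul_dotProduct, dotProduct_smul, smul_eq_mul,
    smul_eq_mul]
  field_simp

lemma dirD_gmet_scaleField {x : V3} (hx : x 2 ≠ 0) (W : V3 → V3) (u v : V3) :
    dirD W (fun p => gmet p (scaleField u p) (scaleField v p)) x = 0 := by
  have hopen : IsOpen {p : V3 | p 2 ≠ 0} := isOpen_compl_singleton.preimage (continuous_apply 2)
  have hconst : (fun p => gmet p (scaleField u p) (scaleField v p)) =ᶠ[nhds x] fun _ => u ⬝ᵥ v :=
    Filter.eventuallyEq_of_mem (hopen.mem_nhds hx) fun p hp => gmet_scaleField hp u v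
  rw [dirD, hconst.fderiv_eq, fderiv_const_apply, zero_apply]

lemma gmet_T3_left (x v : V3) : gmet x (T3 x) v = eta x v := by
  rw [gmet_eq_dotProduct, eta, T3, dotProduct, Fin.sum_univ_three]
  by_cases hx : x 2 = 0
  · simp [hx]
  · simp only [Matrix.cons_val_zero, Matrix.cons_val_one, Matrix.cons_val_two, Matrix.head_cons,
      Matrix.tail_cons, zero_mul, zero_add]
    field_simp

lemma gmet_add_left (x u u' v : V3) : gmet x (u + u') v = gmet x u v + gmet x u' v := by
  simp only [gmet_eq_dotProduct, add_dotProduct, mul_add]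

lemma gmet_smul_left (x u v : V3) (c : ℝ) : gmet x (c • u) v = c * gmet x u v := by
  simp only [gmet_eq_dotProduct, smul_dotProduct, smul_eq_mul]
  ring

lemma gmet_neg_left (x u v : V3) : gmet x (-u) v = -gmet x u v := by
  simp only [gmet_eq_dotProduct, neg_dotProduct, mul_neg]

lemma gmet_comm (x u v : V3) : gmet x u v = gmet x v u := by
  rw [gmet_eq_dotProduct, gmet_eq_dotProduct, dotProduct_comm]

lemma eta_scaleField {x : V3} (hx : x 2 ≠ 0) (u : V3) : eta x (scaleField u x) = -u 2 := by
  simp only [eta, scaleField, Pi.smul_apply, smul_eq_mul]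
  field_simp

lemma lieBracket_T3_scaleField {x : V3} (hx : x 2 ≠ 0) (u : V3) :
    lieBracket T3 (scaleField u) x = -scaleField u x + eta x (scaleField u x) • T3 x := by
  rw [T3_eq_scaleField, lieBracket_scaleField, eta_scaleField hx]
  simp only [scaleField, Matrix.cons_val_two, Matrix.tail_cons, Matrix.head_cons]
  module

lemma gmet_lieBracket_T3_scaleField {x : V3} (hx : x 2 ≠ 0) (u v : V3) :
    gmet x (lieBracket T3 (scaleField u) x) (scaleField v x)
      = -gmet x (scaleField u x) (scaleField v x)
        + eta x (scaleField u x) * eta x (scaleField v x) := by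
  rw [lieBracket_T3_scaleField hx, gmet_add_left, gmet_smul_left, gmet_T3_left, gmet_neg_left]

lemma lieDerivG_T3_scaleField {x : V3} (hx : x 2 ≠ 0) (u v : V3) :
    lieDerivG T3 (scaleField u) (scaleField v) x
      = 2 * (gmet x (scaleField u x) (scaleField v x)
        - eta x (scaleField u x) * eta x (scaleField v x)) := by
  rw [lieDerivG, dirD_gmet_scaleField hx, gmet_lieBracket_T3_scaleField hx,
    gmet_comm x (scaleField u x) (lieBracket T3 (scaleField v) x), gmet_lieBracket_T3_scaleField hx,
    gmet_comm x (scaleField v x)]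
  ring

/-- (L_ξ g)(T_i, T_j) = 2·[g(T_i, T_j) − η(T_i)·η(T_j)] with ξ = T₃. -/
theorem stmt_12 : ∀ i j : Fin 3, ∀ x : V3, x 2 ≠ 0 →
    lieDerivG T3 (T i) (T j) x
      = 2 * (gmet x (T i x) (T j x) - eta x (T i x) * eta x (T j x)) := by
  intro i j x hx
  obtain ⟨u, hu⟩ := T_eq_scaleField i
  obtain ⟨v, hv⟩ := T_eq_scaleField j
  rw [hu, hv]
  exact lieDerivG_T3_scaleField hx u v
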